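/- Let k ≥ 1 and let D be a Borel probability distribution on ℝ_{≥0}^k with 0 < BRev(D) < ∞. Then for every incentive-compatible, individually rational mechanism M = (q,p) with p measurable and Rev(D,M) well-defined, there exists a (finite or countably infinite) sequence X = (x_i)_{i=1}^N of nonzero points, each lying in the topological support of D, such that 9·BRev(D)·MenuGap(X) ≥ Rev(D,M); i.e., for every real r < Rev(D,M)/(9·BRev(D)) there exists a sequence Q with MenuGap(X,Q) ≥ r. -/

import Mathlib

/-!
Write `R = E[p]` and `B = BRev`. If `Pr[p > t] > 0`, some support point `x` paying more than `t`
has `Pr[p > t] · ‖x‖₁ ≤ (3/2) B`: otherwise almost every buyer paying more than `t` values the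
grand bundle above `(3/2) B / Pr[p > t]` (individual rationality gives `p v ≤ ‖v‖₁`), and selling
the bundle at that price would beat `B`. Starting from `t = R/3`, pick such a point, move the
threshold to twice its price, and repeat. Offering `q(x_i)` at the chosen points gives
`gap_i ≥ p(x_i) - p(x_{i-1})` by incentive compatibility, while the revenue from buyers with
`p ∈ (t_i, t_{i+1}]` is at most `t_{i+1} Pr[p > t_i] ≤ 3 B p(x_i) / ‖x_i‖₁`, which is at most
`6 B (p(x_i) - p(x_{i-1})) / ‖x_i‖₁` since `p(x_{i-1}) ≤ t_i / 2 < p(x_i) / 2`. Summing,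
`R ≤ R/3 + 6 B · MenuGap`.
-/

open scoped BigOperators ENNReal NNReal
open Filter MeasureTheory

noncomputable section

namespace Stmt0

/-- Valuation / allocation vectors over `k` items. -/
abbrev V (k : ℕ) := Fin k → ℝ

/-- Dot product. -/
def dot {k : ℕ} (x y : V k) : ℝ := ∑ t, x t * y t

/-- ℓ¹ norm. -/
def norm1 {k : ℕ} (x : V k) : ℝ := ∑ t, |x t|

/-- Sum of a (possibly divergent) series, as limsup of partial sums in `EReal`. -/
def eseries (f : ℕ → ℝ) : EReal :=
  Filter.limsup (fun n => ((∑ i ∈ Finset.range n, f i : ℝ) : EReal)) Filter.atTop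

/-- Valid index set of a sequence of length `N` (finite or `⊤`), indices starting at 1. -/
def idx (N : ℕ∞) : Set ℕ := {i | 1 ≤ i ∧ (i : ℕ∞) ≤ N}

/-- `gap_i^{X,Q} := min_{0 ≤ j < i} (q_i - q_j)·x_i`, the minimum ranging over previous
indices of the sequence together with the index `0` (where `Q 0 = 0`). -/
def gapS {k : ℕ} (S : Set ℕ) (X Q : ℕ → V k) (i : ℕ) : ℝ :=
  sInf {y | ∃ j : ℕ, (j ∈ S ∨ j = 0) ∧ j < i ∧ y = dot (Q i - Q j) (X i)}

/-- `MenuGap(X,Q) := ∑_{i} gap_i^{X,Q}/‖x_i‖₁`. -/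
def menuGapS {k : ℕ} (S : Set ℕ) (X Q : ℕ → V k) : EReal :=
  eseries (S.indicator fun i => gapS S X Q i / norm1 (X i))

/-- An admissible allocation sequence: `q_0 = 0` and all `q_i ∈ [0,1]^k`. -/
def admissibleQ {k : ℕ} (Q : ℕ → V k) : Prop :=
  Q 0 = 0 ∧ ∀ i t, Q i t ∈ Set.Icc (0:ℝ) 1

/-- `BRev(D) := sup_{t > 0} t · Pr_{v ∼ D}[∑ i, v i ≥ t]`. -/
def brev {k : ℕ} (μ : Measure (V k)) : ℝ≥0∞ :=
  ⨆ t : ℝ, ⨆ (_ : (0:ℝ) < t), ENNReal.ofReal t * μ {v | t ≤ ∑ i, v i}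

/-- Topological support of a measure. -/
def msupport {k : ℕ} (μ : Measure (V k)) : Set (V k) :=
  {x | ∀ U : Set (V k), IsOpen U → x ∈ U → 0 < μ U}

lemma msupport_eq_support {k : ℕ} (μ : Measure (V k)) : msupport μ = μ.support := by
  rw [Measure.support_eq_forall_isOpen]
  ext x
  exact ⟨fun h U hxU hU => h U hU hxU, fun h U hU hxU => h U hxU hU⟩

lemma ae_mem_msupport {k : ℕ} (μ : Measure (V k)) : ∀ᵐ x ∂μ, x ∈ msupport μ := by
  rw [msupport_eq_support]
  exact Measure.support_mem_ae

section Vectors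

variable {k : ℕ}

lemma norm1_nonneg (x : V k) : 0 ≤ norm1 x :=
  Finset.sum_nonneg fun _ _ => abs_nonneg _

lemma norm1_eq_sum {x : V k} (hx : ∀ t, 0 ≤ x t) : norm1 x = ∑ t, x t :=
  Finset.sum_congr rfl fun t _ => abs_of_nonneg (hx t)

lemma dot_le_norm1 {x y : V k} (hx : ∀ t, 0 ≤ x t) (hy : ∀ t, y t ∈ Set.Icc (0:ℝ) 1) :
    dot x y ≤ norm1 x := by
  rw [norm1_eq_sum hx]
  exact Finset.sum_le_sum fun t _ => mul_le_of_le_one_right (hx t) (hy t).2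

lemma dot_sub_left (a b x : V k) : dot (a - b) x = dot x a - dot x b := by
  simp only [dot, Pi.sub_apply, ← Finset.sum_sub_distrib]
  exact Finset.sum_congr rfl fun t _ => by ring

@[simp] lemma dot_zero_left (y : V k) : dot 0 y = 0 := by
  simp [dot]

@[simp] lemma dot_zero_right (x : V k) : dot x 0 = 0 := by
  simp [dot]

end Vectors

section Mechanism

variable {k : ℕ}

def IncentiveCompatible (q : V k → V k) (p : V k → ℝ) : Prop :=
  ∀ v w : V k, (∀ t, 0 ≤ v t) → (∀ t, 0 ≤ w t) → dot v (q w) - p w ≤ dot v (q v) - p v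

def IndividuallyRational (q : V k → V k) (p : V k → ℝ) : Prop :=
  ∀ v : V k, (∀ t, 0 ≤ v t) → 0 ≤ dot v (q v) - p v

variable {q : V k → V k} {p : V k → ℝ}

lemma price_le_norm1 (hq : ∀ v t, q v t ∈ Set.Icc (0:ℝ) 1)
    (hIR : IndividuallyRational q p) {v : V k} (hv : ∀ t, 0 ≤ v t) :
    p v ≤ norm1 v := by
  linarith [hIR v hv, dot_le_norm1 hv (hq v)]

lemma price_zero (hpnn : ∀ v, 0 ≤ p v)
    (hIR : IndividuallyRational q p) : p 0 = 0 :=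
  le_antisymm (by simpa using hIR 0 fun _ => le_rfl) (hpnn 0)

end Mechanism

section BundlingRevenue

variable {k : ℕ} {μ : Measure (V k)}

lemma ofReal_mul_measure_le_brev {m : ℝ} (hm : 0 < m) :
    ENNReal.ofReal m * μ {v | m ≤ ∑ i, v i} ≤ brev μ :=
  le_iSup₂_of_le (f := fun t (_ : 0 < t) => ENNReal.ofReal t * μ {v | t ≤ ∑ i, v i}) m hm le_rfl

lemma exists_mem_msupport_measureReal_mul_norm1_le [IsFiniteMeasure μ]
    (hμnn : ∀ᵐ v ∂μ, ∀ t, 0 ≤ v t) (hb0 : 0 < brev μ) (hbfin : brev μ < ⊤)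
    {S : Set (V k)} (hS : 0 < μ S) {c : ℝ} (hc : 1 < c) :
    ∃ x ∈ S, x ∈ msupport μ ∧ (∀ t, 0 ≤ x t) ∧ μ.real S * norm1 x ≤ c * (brev μ).toReal := by
  by_contra! h
  have hB : 0 < (brev μ).toReal := ENNReal.toReal_pos hb0.ne' hbfin.ne
  have hSr : 0 < μ.real S := ENNReal.toReal_pos hS.ne' (measure_ne_top μ S)
  set m := c * (brev μ).toReal / μ.real S
  have hm : 0 < m := by positivity
  have hSle : μ S ≤ μ {v | m ≤ ∑ t, v t} := by
    refine measure_mono_ae ?_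
    filter_upwards [ae_mem_msupport μ, hμnn] with v hv hvnn hvS
    show m ≤ ∑ t, v t
    rw [← norm1_eq_sum hvnn, div_le_iff₀ hSr]
    linarith [h v hvS hv hvnn]
  have hbrev := ENNReal.toReal_mono hbfin.ne
    ((mul_le_mul_right hSle _).trans (ofReal_mul_measure_le_brev (μ := μ) hm))
  rw [ENNReal.toReal_mul, ENNReal.toReal_ofReal hm.le, ← measureReal_def,
    div_mul_cancel₀ _ hSr.ne'] at hbrev
  nlinarith

end BundlingRevenue

section MenuGap

variable {k : ℕ}

lemma sum_range_le_eseries {f : ℕ → ℝ} (hf : ∀ i, 0 ≤ f i) (n : ℕ) :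
    ((∑ i ∈ Finset.range n, f i : ℝ) : EReal) ≤ eseries f :=
  le_limsup_of_frequently_le' <| (eventually_ge_atTop n).frequently.mono fun _ hm =>
    EReal.coe_le_coe_iff.2 <|
      Finset.sum_le_sum_of_subset_of_nonneg (Finset.range_mono hm) fun i _ _ => hf i

lemma mem_idx_top {i : ℕ} : i ∈ idx ⊤ ↔ 1 ≤ i := by
  simp [idx]

lemma idx_zero : idx 0 = ∅ :=
  Set.eq_empty_of_forall_notMem fun i hi =>
    absurd (le_antisymm hi.2 bot_le) (by exact_mod_cast (Nat.one_le_iff_ne_zero.1 hi.1))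

lemma menuGapS_idx_zero (X Q : ℕ → V k) : menuGapS (idx 0) X Q = 0 := by
  simp [menuGapS, eseries, idx_zero]

def menuQ (q : V k → V k) (X : ℕ → V k) (j : ℕ) : V k := if j = 0 then 0 else q (X j)

lemma admissibleQ_menuQ {q : V k → V k} (hq : ∀ v t, q v t ∈ Set.Icc (0:ℝ) 1) (X : ℕ → V k) :
    admissibleQ (menuQ q X) := by
  refine ⟨if_pos rfl, fun i t => ?_⟩
  unfold menuQ
  split_ifs
  · exact ⟨le_rfl, zero_le_one⟩
  · exact hq _ t

variable {q : V k → V k} {p : V k → ℝ} {X : ℕ → V k}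

lemma sub_le_gapS (hpnn : ∀ v, 0 ≤ p v) (hIC : IncentiveCompatible q p)
    (hIR : IndividuallyRational q p) (hX : ∀ i t, 0 ≤ X i t)
    (hmono : Monotone fun i => p (X i)) (S : Set ℕ) {i : ℕ} (hi : 1 ≤ i) :
    p (X i) - p (X (i - 1)) ≤ gapS S X (menuQ q X) i := by
  have hQi : menuQ q X i = q (X i) := if_neg (by omega)
  refine le_csInf ⟨_, 0, Or.inr rfl, hi, rfl⟩ ?_
  rintro _ ⟨j, -, hji, rfl⟩
  rw [hQi, dot_sub_left]
  rcases Nat.eq_zero_or_pos j with rfl | hj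
  · rw [show menuQ q X 0 = 0 from if_pos rfl, dot_zero_right]
    linarith [hIR (X i) (hX i), hpnn (X (i - 1))]
  · rw [show menuQ q X j = q (X j) from if_neg hj.ne']
    linarith [hIC (X i) (X j) (hX i) (hX j), hmono (show j ≤ i - 1 by omega)]

lemma sum_le_menuGapS_idx_top (hpnn : ∀ v, 0 ≤ p v) (hIC : IncentiveCompatible q p)
    (hIR : IndividuallyRational q p) (hX : ∀ i t, 0 ≤ X i t)
    (hmono : Monotone fun i => p (X i)) (n : ℕ) :
    ((∑ i ∈ Finset.range n, (p (X (i + 1)) - p (X i)) / norm1 (X (i + 1)) : ℝ) : EReal) ≤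
      menuGapS (idx ⊤) X (menuQ q X) := by
  set f := (idx ⊤).indicator fun i => gapS (idx ⊤) X (menuQ q X) i / norm1 (X i)
  have hf : ∀ i, 1 ≤ i → (p (X i) - p (X (i - 1))) / norm1 (X i) ≤ f i := fun i hi => by
    rw [show f i = _ from Set.indicator_of_mem (mem_idx_top.2 hi) _]
    exact div_le_div_of_nonneg_right (sub_le_gapS hpnn hIC hIR hX hmono _ hi) (norm1_nonneg _)
  have hf0 : f 0 = 0 := Set.indicator_of_notMem (by simp [mem_idx_top]) _
  have hfnn : ∀ i, 0 ≤ f i := fun i => by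
    rcases Nat.eq_zero_or_pos i with rfl | hi
    · exact hf0.ge
    · exact (div_nonneg (sub_nonneg.2 (hmono (Nat.sub_le i 1))) (norm1_nonneg _)).trans (hf i hi)
  refine le_trans (EReal.coe_le_coe_iff.2 ?_) (sum_range_le_eseries hfnn (n + 1))
  rw [Finset.sum_range_succ', hf0, add_zero]
  exact Finset.sum_le_sum fun i _ => hf (i + 1) (Nat.le_add_left 1 i)

end MenuGap

section Truncation

variable {α : Type*} [MeasurableSpace α] {μ : Measure α} {p : α → ℝ}

lemma setIntegral_le_mul_measureReal (hpnn : ∀ v, 0 ≤ p v) {A : Set α} (hA : μ A < ⊤) {c : ℝ}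
    (hc : ∀ v ∈ A, p v ≤ c) : ∫ v in A, p v ∂μ ≤ c * μ.real A :=
  (le_abs_self _).trans <| norm_setIntegral_le_of_norm_le_const hA fun v hv => by
    rw [Real.norm_of_nonneg (hpnn v)]
    exact hc v hv

lemma setIntegral_preimage_Iic_add_Ioc (hpmeas : Measurable p) (hpint : Integrable p μ)
    {a b : ℝ} (hab : a ≤ b) :
    ∫ v in p ⁻¹' Set.Iic b, p v ∂μ =
      ∫ v in p ⁻¹' Set.Iic a, p v ∂μ + ∫ v in p ⁻¹' Set.Ioc a b, p v ∂μ := by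
  rw [← Set.Iic_union_Ioc_eq_Iic hab, Set.preimage_union]
  exact setIntegral_union ((Set.Iic_disjoint_Ioc le_rfl).preimage p)
    (hpmeas measurableSet_Ioc) hpint.integrableOn hpint.integrableOn

lemma tendsto_setIntegral_preimage_Iic (hpmeas : Measurable p) (hpint : Integrable p μ) :
    Tendsto (fun c : ℝ => ∫ v in p ⁻¹' Set.Iic c, p v ∂μ) atTop (nhds (∫ v, p v ∂μ)) := by
  have h := tendsto_setIntegral_of_monotone (μ := μ) (fun c => hpmeas measurableSet_Iic)
    (fun a b hab => Set.preimage_mono (Set.Iic_subset_Iic.2 hab)) hpint.integrableOn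
  rwa [← Set.preimage_iUnion, Set.iUnion_Iic, Set.preimage_univ, Measure.restrict_univ] at h

lemma measure_setOf_lt_pos_of_lt_integral [IsProbabilityMeasure μ] (hpint : Integrable p μ) {c : ℝ}
    (hc : c < ∫ v, p v ∂μ) : 0 < μ {v | c < p v} := by
  refine pos_iff_ne_zero.2 fun h0 => hc.not_ge ?_
  have hae : ∀ᵐ v ∂μ, p v ≤ c := by
    rw [ae_iff]
    simpa only [not_le] using h0
  simpa using integral_mono_ae hpint (integrable_const c) hae

end Truncation

section Greedy

variable {k : ℕ} (μ : Measure (V k)) (p : V k → ℝ)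

def IsGreedyChoice (c B : ℝ) (F : ℝ → V k) : Prop :=
  ∀ t, 0 < t → 0 < μ {v | t < p v} →
    (F t ∈ msupport μ ∧ (∀ s, 0 ≤ F t s) ∧ 0 < norm1 (F t)) ∧ t < p (F t) ∧
      μ.real {v | t < p v} * norm1 (F t) ≤ c * B

/-- A state is a price threshold and the last point chosen. Once prices above the threshold have
probability zero, the last point is repeated: this adds nothing to the menu gap and keeps the
sequence infinite. -/
def greedyStep (F : ℝ → V k) (s : ℝ × V k) : ℝ × V k :=
  if 0 < μ {v | s.1 < p v} then (2 * p (F s.1), F s.1) else (2 * s.1, s.2)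

def greedySeq (F : ℝ → V k) (L₀ : ℝ) (n : ℕ) : ℝ × V k := (greedyStep μ p F)^[n] (L₀, 0)

def IsGreedyState (s : ℝ × V k) : Prop := 0 < s.1 ∧ p s.2 ≤ s.1 / 2

variable {μ p} {q : V k → V k} {F : ℝ → V k} {c B L₀ : ℝ} {s : ℝ × V k}

lemma exists_isGreedyChoice [IsFiniteMeasure μ] (hμnn : ∀ᵐ v ∂μ, ∀ t, 0 ≤ v t)
    (hb0 : 0 < brev μ) (hbfin : brev μ < ⊤) (hq : ∀ v t, q v t ∈ Set.Icc (0:ℝ) 1)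
    (hIR : IndividuallyRational q p) (hc : 1 < c) :
    ∃ F, IsGreedyChoice μ p c (brev μ).toReal F := by
  choose! F hF using fun t (_ : 0 < t) (h : 0 < μ {v | t < p v}) =>
    exists_mem_msupport_measureReal_mul_norm1_le hμnn hb0 hbfin h hc
  refine ⟨F, fun t ht h => ?_⟩
  obtain ⟨hlt, hmem, hnn, hle⟩ := hF t ht h
  exact ⟨⟨hmem, hnn, by linarith [price_le_norm1 hq hIR hnn, show t < p (F t) from hlt]⟩, hlt, hle⟩

lemma IsGreedyState.greedyStep (hF : IsGreedyChoice μ p c B F) (hs : IsGreedyState p s) :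
    IsGreedyState p (greedyStep μ p F s) := by
  unfold Stmt0.greedyStep
  split_ifs with h
  · exact ⟨by linarith [hs.1, (hF s.1 hs.1 h).2.1], le_of_eq (by ring)⟩
  · exact ⟨by linarith [hs.1], by linarith [hs.1, hs.2]⟩

lemma two_mul_le_greedyStep_fst (hF : IsGreedyChoice μ p c B F) (hs : IsGreedyState p s) :
    2 * s.1 ≤ (greedyStep μ p F s).1 := by
  unfold greedyStep
  split_ifs with h
  · linarith [(hF s.1 hs.1 h).2.1]
  · exact le_rfl

lemma price_le_greedyStep_snd (hF : IsGreedyChoice μ p c B F) (hs : IsGreedyState p s) :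
    p s.2 ≤ p (greedyStep μ p F s).2 := by
  unfold greedyStep
  split_ifs with h
  · linarith [hs.1, hs.2, (hF s.1 hs.1 h).2.1]
  · exact le_rfl

lemma setIntegral_Ioc_greedyStep_le [IsFiniteMeasure μ] (hpnn : ∀ v, 0 ≤ p v)
    (hF : IsGreedyChoice μ p c B F) (hs : IsGreedyState p s) :
    ∫ v in p ⁻¹' Set.Ioc s.1 (greedyStep μ p F s).1, p v ∂μ ≤
      4 * c * B * ((p (greedyStep μ p F s).2 - p s.2) / norm1 (greedyStep μ p F s).2) := by
  unfold greedyStep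
  split_ifs with h
  · obtain ⟨⟨-, -, hn⟩, hlt, hle⟩ := hF s.1 hs.1 h
    have hm : 0 ≤ μ.real {v | s.1 < p v} * norm1 (F s.1) :=
      mul_nonneg measureReal_nonneg (norm1_nonneg _)
    obtain ⟨hpos, hps⟩ := hs
    calc ∫ v in p ⁻¹' Set.Ioc s.1 (2 * p (F s.1)), p v ∂μ
        ≤ 2 * p (F s.1) * μ.real (p ⁻¹' Set.Ioc s.1 (2 * p (F s.1))) :=
          setIntegral_le_mul_measureReal hpnn (measure_lt_top _ _) fun v hv => hv.2
      _ ≤ 2 * p (F s.1) * μ.real {v | s.1 < p v} :=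
          mul_le_mul_of_nonneg_left (measureReal_mono fun v hv => hv.1) (by linarith)
      _ ≤ 4 * c * B * ((p (F s.1) - p s.2) / norm1 (F s.1)) := by
          rw [mul_div_assoc', le_div_iff₀ hn]
          nlinarith
  · rw [setIntegral_measure_zero _ (measure_mono_null (fun v hv => hv.1) (not_lt.1 h |>.antisymm
      bot_le)), sub_self, zero_div, mul_zero]

lemma greedySeq_succ (n : ℕ) :
    greedySeq μ p F L₀ (n + 1) = greedyStep μ p F (greedySeq μ p F L₀ n) :=
  Function.iterate_succ_apply' _ _ _

lemma isGreedyState_greedySeq (hF : IsGreedyChoice μ p c B F) (h₀ : IsGreedyState p (L₀, 0))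
    (n : ℕ) : IsGreedyState p (greedySeq μ p F L₀ n) := by
  induction n with
  | zero => exact h₀
  | succ n ih => exact greedySeq_succ (μ := μ) n ▸ ih.greedyStep hF

lemma monotone_price_greedySeq (hF : IsGreedyChoice μ p c B F) (h₀ : IsGreedyState p (L₀, 0)) :
    Monotone fun n => p (greedySeq μ p F L₀ n).2 :=
  monotone_nat_of_le_succ fun n => by
    simpa only [greedySeq_succ] using
      price_le_greedyStep_snd hF (isGreedyState_greedySeq hF h₀ n)

lemma tendsto_greedySeq_fst (hF : IsGreedyChoice μ p c B F) (h₀ : IsGreedyState p (L₀, 0)) :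
    Tendsto (fun n => (greedySeq μ p F L₀ n).1) atTop atTop := by
  have hge : ∀ n, L₀ * 2 ^ n ≤ (greedySeq μ p F L₀ n).1 := fun n => by
    induction n with
    | zero => simp [greedySeq]
    | succ n ih =>
      rw [greedySeq_succ, pow_succ]
      linarith [two_mul_le_greedyStep_fst hF (isGreedyState_greedySeq hF h₀ n)]
  exact tendsto_atTop_mono hge <|
    (tendsto_pow_atTop_atTop_of_one_lt one_lt_two).const_mul_atTop h₀.1

lemma greedySeq_snd_mem (hF : IsGreedyChoice μ p c B F) (h₀ : IsGreedyState p (L₀, 0))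
    (halive : 0 < μ {v | L₀ < p v}) {i : ℕ} (hi : 1 ≤ i) :
    (greedySeq μ p F L₀ i).2 ∈ msupport μ ∧ (∀ t, 0 ≤ (greedySeq μ p F L₀ i).2 t) ∧
      0 < norm1 (greedySeq μ p F L₀ i).2 := by
  obtain ⟨n, rfl⟩ := Nat.exists_eq_add_of_le' hi
  induction n with
  | zero =>
    rw [greedySeq_succ, greedySeq, Function.iterate_zero_apply, greedyStep, if_pos halive]
    exact (hF L₀ h₀.1 halive).1
  | succ n ih =>
    have hpos := (isGreedyState_greedySeq hF h₀ (n + 1)).1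
    rw [greedySeq_succ, greedyStep]
    split_ifs with h
    · exact (hF _ hpos h).1
    · exact ih (Nat.le_add_left 1 n)

lemma greedySeq_snd_nonneg (hF : IsGreedyChoice μ p c B F) (h₀ : IsGreedyState p (L₀, 0))
    (halive : 0 < μ {v | L₀ < p v}) (i : ℕ) (t : Fin k) : 0 ≤ (greedySeq μ p F L₀ i).2 t := by
  rcases Nat.eq_zero_or_pos i with rfl | hi
  · exact le_rfl
  · exact (greedySeq_snd_mem hF h₀ halive hi).2.1 t

lemma setIntegral_Iic_greedySeq_le [IsProbabilityMeasure μ] (hpmeas : Measurable p)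
    (hpint : Integrable p μ) (hpnn : ∀ v, 0 ≤ p v) (hF : IsGreedyChoice μ p c B F)
    (h₀ : IsGreedyState p (L₀, 0)) (n : ℕ) :
    ∫ v in p ⁻¹' Set.Iic (greedySeq μ p F L₀ n).1, p v ∂μ ≤
      L₀ + 4 * c * B * ∑ i ∈ Finset.range n,
        (p (greedySeq μ p F L₀ (i + 1)).2 - p (greedySeq μ p F L₀ i).2) /
          norm1 (greedySeq μ p F L₀ (i + 1)).2 := by
  induction n with
  | zero =>
    calc ∫ v in p ⁻¹' Set.Iic L₀, p v ∂μ ≤ L₀ * μ.real (p ⁻¹' Set.Iic L₀) :=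
          setIntegral_le_mul_measureReal hpnn (measure_lt_top _ _) fun v hv => hv
      _ ≤ L₀ := mul_le_of_le_one_right h₀.1.le measureReal_le_one
      _ = _ := by simp
  | succ n ih =>
    have hs := isGreedyState_greedySeq hF h₀ n
    have hchunk := setIntegral_Ioc_greedyStep_le hpnn hF hs
    have hle := two_mul_le_greedyStep_fst hF hs
    rw [← greedySeq_succ] at hchunk hle
    rw [setIntegral_preimage_Iic_add_Ioc hpmeas hpint
        (show (greedySeq μ p F L₀ n).1 ≤ _ by linarith [hs.1]),
      Finset.sum_range_succ, mul_add, ← add_assoc]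
    linarith

end Greedy

theorem stmt0 (k : ℕ) (μ : Measure (V k)) [IsProbabilityMeasure μ]
    (hμnn : ∀ᵐ v ∂μ, ∀ t, 0 ≤ v t)
    (hb0 : 0 < brev μ) (hbfin : brev μ < ⊤)
    (q : V k → V k) (p : V k → ℝ)
    (hq : ∀ v t, q v t ∈ Set.Icc (0:ℝ) 1)
    (hpnn : ∀ v, 0 ≤ p v)
    (hIC : ∀ v w : V k, (∀ t, 0 ≤ v t) → (∀ t, 0 ≤ w t) →
      dot v (q w) - p w ≤ dot v (q v) - p v)
    (hIR : ∀ v : V k, (∀ t, 0 ≤ v t) → 0 ≤ dot v (q v) - p v)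
    (hpmeas : Measurable p) (hpint : Integrable p μ) :
    ∃ (N : ℕ∞) (X : ℕ → V k),
      (∀ i ∈ idx N, X i ≠ 0 ∧ X i ∈ msupport μ) ∧
      ∀ r : ℝ, r < (∫ v, p v ∂μ) / (9 * (brev μ).toReal) →
        ∃ Q : ℕ → V k, admissibleQ Q ∧ (r : EReal) ≤ menuGapS (idx N) X Q := by
  set R := ∫ v, p v ∂μ
  set B := (brev μ).toReal
  have hB : 0 < B := ENNReal.toReal_pos hb0.ne' hbfin.ne
  rcases (integral_nonneg (μ := μ) (f := p) hpnn).eq_or_lt with hR | hR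
  · refine ⟨0, 0, fun i hi => by simp [idx_zero] at hi, fun r hr => ?_⟩
    refine ⟨menuQ q 0, admissibleQ_menuQ hq 0, ?_⟩
    rw [menuGapS_idx_zero]
    exact_mod_cast (hr.trans_eq (by rw [show R = 0 from hR.symm, zero_div])).le
  have h₀ : IsGreedyState p (R / 3, 0) :=
    ⟨by positivity, by rw [price_zero hpnn hIR]; positivity⟩
  have halive := measure_setOf_lt_pos_of_lt_integral hpint (show R / 3 < R by linarith)
  obtain ⟨F, hF⟩ := exists_isGreedyChoice hμnn hb0 hbfin hq hIR (c := 3 / 2) (by norm_num)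
  set X := fun n => (greedySeq μ p F (R / 3) n).2
  refine ⟨⊤, X, fun i hi => ?_, fun r hr => ⟨menuQ q X, admissibleQ_menuQ hq X, ?_⟩⟩
  · obtain ⟨hmem, -, hnorm⟩ := greedySeq_snd_mem hF h₀ halive (mem_idx_top.1 hi)
    exact ⟨fun h0 => by simp [X, h0, norm1] at hnorm, hmem⟩
  have hlt : R / 3 + 4 * (3 / 2) * B * r < R := by
    rw [lt_div_iff₀ (by positivity)] at hr
    linarith
  obtain ⟨n, hn⟩ := (((tendsto_setIntegral_preimage_Iic hpmeas hpint).comp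
    (tendsto_greedySeq_fst hF h₀)).eventually (lt_mem_nhds hlt)).exists
  refine le_trans (EReal.coe_le_coe_iff.2 ?_) (sum_le_menuGapS_idx_top hpnn hIC hIR
    (greedySeq_snd_nonneg hF h₀ halive) (monotone_price_greedySeq hF h₀) n)
  have := setIntegral_Iic_greedySeq_le hpmeas hpint hpnn hF h₀ n
  simp only [Function.comp_apply] at hn
  nlinarith

end Stmt0
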